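/- arXiv:2207.11183 — 7 statements merged into one kernel-verified Lean document; each statement's English description precedes it below -/
import Mathlib

section
/- Let G and F be finite simple graphs. Let (Γ_i)_{i∈V(G)} be complex d₁×d₁ orthogonal projection matrices with Γ_iΓ_j = 0 for all edges (i,j) of G, and let w^G : V(G) → ℝ≥0 satisfy Σ_{i∈I} w^G_i ≤ 1 for every independent set I of G and Σ_i w^G_i Γ_i ≥ η₁·𝟙 in the Loewner (positive semidefinite) order, with η₁ ≥ 0. Similarly let (Ω_j)_{j∈V(F)} be d₂×d₂ orthogonal projections with Ω_jΩ_k = 0 for edges of F, and w^F : V(F) → ℝ≥0 with Σ_{j∈J} w^F_j ≤ 1 for every independent set J of F and Σ_j w^F_j Ω_j ≥ η₂·𝟙, with η₂ ≥ 0. Then the weights w(i,j) = w^G_i·w^F_j satisfy Σ_{(i,j)∈K} w(i,j) ≤ 1 for every independent set K of the disjunctive product G∨F, and Σ_{i,j} w(i,j)·(Γ_i ⊗ Ω_j) ≥ η₁η₂·𝟙 on ℂ^{d₁d₂}. -/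
/-!
An independent set `K` of `G ∨ F` projects onto an independent set of `G`, and its slice
`{j | (i, j) ∈ K}` over each vertex `i` is independent in `F`; summing the product weights slice by
slice bounds them by `∑ i, w^G_i ≤ 1`. For the operator inequality, the weighted sum of the
`Γ_i ⊗ Ω_j` is the Kronecker product `A ⊗ B` of the two weighted sums, and writing `A = A' + η₁`,
`B = B' + η₂` with `A', B' ≥ 0` gives `A ⊗ B - η₁η₂ = A' ⊗ B' + η₂ A' ⊗ 𝟙 + η₁ 𝟙 ⊗ B' ≥ 0`.
-/

open scoped Classical ComplexOrder Kronecker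
noncomputable section

/-- The disjunctive product of two simple graphs. -/
def disjProd {α β : Type*} (G : SimpleGraph α) (F : SimpleGraph β) :
    SimpleGraph (α × β) where
  Adj p q := G.Adj p.1 q.1 ∨ F.Adj p.2 q.2
  symm := ⟨fun _ _ h => h.imp (fun h' => h'.symm) (fun h' => h'.symm)⟩
  loopless := ⟨fun p h => h.elim (G.loopless.irrefl p.1) (F.loopless.irrefl p.2)⟩

/-- A set of vertices is independent if it is pairwise non-adjacent. -/
def IsIndep {α : Type*} (G : SimpleGraph α) (S : Set α) : Prop :=
  S.Pairwise fun a b => ¬ G.Adj a b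

open Finset Matrix

section IndependentSets

variable {α β : Type*} {G : SimpleGraph α} {F : SimpleGraph β}

theorem IsIndep.image_fst_of_disjProd {K : Set (α × β)} (hK : IsIndep (disjProd G F) K) :
    IsIndep G (Prod.fst '' K) := by
  rintro _ ⟨p, hp, rfl⟩ _ ⟨q, hq, rfl⟩ hne hadj
  exact hK hp hq (fun h => hne (h ▸ rfl)) (Or.inl hadj)

theorem IsIndep.preimage_mk_of_disjProd {K : Set (α × β)} (hK : IsIndep (disjProd G F) K)
    (i : α) : IsIndep F (Prod.mk i ⁻¹' K) := by
  intro j hj j' hj' hne hadj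
  exact hK hj hj' (fun h => hne (congrArg Prod.snd h)) (Or.inr hadj)

theorem sum_mul_le_one_of_isIndep_disjProd {wG : α → ℝ} {wF : β → ℝ}
    (hwG0 : ∀ i, 0 ≤ wG i)
    (hwGI : ∀ I : Finset α, IsIndep G ↑I → ∑ i ∈ I, wG i ≤ 1)
    (hwFJ : ∀ J : Finset β, IsIndep F ↑J → ∑ j ∈ J, wF j ≤ 1)
    {K : Finset (α × β)} (hK : IsIndep (disjProd G F) ↑K) :
    ∑ p ∈ K, wG p.1 * wF p.2 ≤ 1 := by
  let slice (i : α) : Finset β := K.preimage (Prod.mk i) (Prod.mk_right_injective i).injOn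
  have hslice (i : α) : ∑ j ∈ slice i, wF j ≤ 1 :=
    hwFJ _ (by simpa [slice] using hK.preimage_mk_of_disjProd i)
  calc ∑ p ∈ K, wG p.1 * wF p.2
      = ∑ i ∈ K.image Prod.fst, wG i * ∑ j ∈ slice i, wF j := by
        rw [sum_finset_product' K (K.image Prod.fst) slice (fun p => by
          simpa [slice] using fun hp => ⟨p.2, hp⟩)
          (f := fun i j => wG i * wF j)]
        simp_rw [mul_sum]
    _ ≤ ∑ i ∈ K.image Prod.fst, wG i :=
        sum_le_sum fun i _ => mul_le_of_le_one_right (hwG0 i) (hslice i)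
    _ ≤ 1 := hwGI _ (by simpa using hK.image_fst_of_disjProd)

end IndependentSets

section Kronecker

variable {l m n p : Type*}

theorem sum_smul_kronecker_sum_smul {ι κ R : Type*} [Fintype ι] [Fintype κ] [CommSemiring R]
    (a : ι → R) (b : κ → R) (A : ι → Matrix l m R) (B : κ → Matrix n p R) :
    (∑ i, a i • A i) ⊗ₖ (∑ j, b j • B j) =
      ∑ q : ι × κ, (a q.1 * b q.2) • (A q.1 ⊗ₖ B q.2) := by
  ext ⟨i, j⟩ ⟨k, k'⟩
  simp only [Matrix.sum_apply, Matrix.smul_apply, kroneckerMap_apply, smul_eq_mul,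
    Fintype.sum_prod_type, sum_mul_sum]
  exact sum_congr rfl fun _ _ => sum_congr rfl fun _ _ => by ring

variable [Fintype m] [Fintype n] [DecidableEq m] [DecidableEq n] {𝕜 : Type*} [RCLike 𝕜]

theorem PosSemidef.kronecker_sub_smul_one {A : Matrix m m 𝕜} {B : Matrix n n 𝕜} {a b : ℝ}
    (ha : 0 ≤ a) (hb : 0 ≤ b) (hA : (A - (a : 𝕜) • 1).PosSemidef)
    (hB : (B - (b : 𝕜) • 1).PosSemidef) :
    (A ⊗ₖ B - ((a * b : ℝ) : 𝕜) • 1).PosSemidef := by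
  obtain ⟨A', hA', rfl⟩ : ∃ A', A'.PosSemidef ∧ A = A' + (a : 𝕜) • 1 :=
    ⟨_, hA, (sub_add_cancel _ _).symm⟩
  obtain ⟨B', hB', rfl⟩ : ∃ B', B'.PosSemidef ∧ B = B' + (b : 𝕜) • 1 :=
    ⟨_, hB, (sub_add_cancel _ _).symm⟩
  have hexpand : (A' + (a : 𝕜) • 1) ⊗ₖ (B' + (b : 𝕜) • 1) - ((a * b : ℝ) : 𝕜) • 1
      = A' ⊗ₖ B' + A' ⊗ₖ ((b : 𝕜) • 1) + ((a : 𝕜) • 1) ⊗ₖ B' := by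
    simp only [add_kronecker, kronecker_add, smul_kronecker, kronecker_smul, one_kronecker_one,
      RCLike.ofReal_mul]
    module
  rw [hexpand]
  have hb1 : ((b : 𝕜) • (1 : Matrix n n 𝕜)).PosSemidef := PosSemidef.one.smul (by exact_mod_cast hb)
  have ha1 : ((a : 𝕜) • (1 : Matrix m m 𝕜)).PosSemidef := PosSemidef.one.smul (by exact_mod_cast ha)
  exact ((hA'.kronecker hB').add (hA'.kronecker hb1)).add (ha1.kronecker hB')

end Kronecker

theorem kronecker_SIC_general {α β : Type*} [Fintype α] [Fintype β]
    (G : SimpleGraph α) (F : SimpleGraph β) (d₁ d₂ : ℕ)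
    (Γ : α → Matrix (Fin d₁) (Fin d₁) ℂ) (Ω : β → Matrix (Fin d₂) (Fin d₂) ℂ)
    (wG : α → ℝ) (hwG0 : ∀ i, 0 ≤ wG i)
    (hwGI : ∀ I : Finset α, IsIndep G ↑I → ∑ i ∈ I, wG i ≤ 1)
    (wF : β → ℝ)
    (hwFJ : ∀ J : Finset β, IsIndep F ↑J → ∑ j ∈ J, wF j ≤ 1)
    (η₁ η₂ : ℝ) (hη₁ : 0 ≤ η₁) (hη₂ : 0 ≤ η₂)
    (hΓop : Matrix.PosSemidef (∑ i, (wG i : ℂ) • Γ i - (η₁ : ℂ) • 1))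
    (hΩop : Matrix.PosSemidef (∑ j, (wF j : ℂ) • Ω j - (η₂ : ℂ) • 1)) :
    (∀ K : Finset (α × β), IsIndep (disjProd G F) ↑K →
      ∑ p ∈ K, wG p.1 * wF p.2 ≤ 1) ∧
    Matrix.PosSemidef
      (∑ p : α × β, ((wG p.1 * wF p.2 : ℝ) : ℂ) • (Γ p.1 ⊗ₖ Ω p.2)
        - ((η₁ * η₂ : ℝ) : ℂ) • 1) := by
  refine ⟨fun K hK => sum_mul_le_one_of_isIndep_disjProd hwG0 hwGI hwFJ hK, ?_⟩
  rw [show ∑ p : α × β, ((wG p.1 * wF p.2 : ℝ) : ℂ) • (Γ p.1 ⊗ₖ Ω p.2)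
      = (∑ i, (wG i : ℂ) • Γ i) ⊗ₖ (∑ j, (wF j : ℂ) • Ω j) by
    simp only [sum_smul_kronecker_sum_smul, Complex.ofReal_mul]]
  exact PosSemidef.kronecker_sub_smul_one hη₁ hη₂ hΓop hΩop

theorem kronecker_SIC {α β : Type*} [Fintype α] [Fintype β]
    (G : SimpleGraph α) (F : SimpleGraph β) (d₁ d₂ : ℕ)
    (Γ : α → Matrix (Fin d₁) (Fin d₁) ℂ) (Ω : β → Matrix (Fin d₂) (Fin d₂) ℂ)
    (hΓherm : ∀ i, (Γ i).IsHermitian) (hΓidem : ∀ i, Γ i * Γ i = Γ i)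
    (hΓorth : ∀ i j, G.Adj i j → Γ i * Γ j = 0)
    (hΩherm : ∀ j, (Ω j).IsHermitian) (hΩidem : ∀ j, Ω j * Ω j = Ω j)
    (hΩorth : ∀ j k, F.Adj j k → Ω j * Ω k = 0)
    (wG : α → ℝ) (hwG0 : ∀ i, 0 ≤ wG i)
    (hwGI : ∀ I : Finset α, IsIndep G ↑I → ∑ i ∈ I, wG i ≤ 1)
    (wF : β → ℝ) (hwF0 : ∀ j, 0 ≤ wF j)
    (hwFJ : ∀ J : Finset β, IsIndep F ↑J → ∑ j ∈ J, wF j ≤ 1)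
    (η₁ η₂ : ℝ) (hη₁ : 0 ≤ η₁) (hη₂ : 0 ≤ η₂)
    (hΓop : Matrix.PosSemidef (∑ i, (wG i : ℂ) • Γ i - (η₁ : ℂ) • 1))
    (hΩop : Matrix.PosSemidef (∑ j, (wF j : ℂ) • Ω j - (η₂ : ℂ) • 1)) :
    (∀ K : Finset (α × β), IsIndep (disjProd G F) ↑K →
      ∑ p ∈ K, wG p.1 * wF p.2 ≤ 1) ∧
    Matrix.PosSemidef
      (∑ p : α × β, ((wG p.1 * wF p.2 : ℝ) : ℂ) • (Γ p.1 ⊗ₖ Ω p.2)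
        - ((η₁ * η₂ : ℝ) : ℂ) • 1) :=
  kronecker_SIC_general G F d₁ d₂ Γ Ω wG hwG0 hwGI wF hwFJ η₁ η₂ hη₁ hη₂ hΓop hΩop
end
end

section
/- Let ℓ > 1 be an odd integer and m ≥ 1. There is no family (P_j)_{j∈ZMod ℓ} of complex 2m×2m orthogonal projection matrices, each of rank m, such that P_j·P_{j+1} = 0 for every j ∈ ZMod ℓ (indices modulo ℓ). In other words, the odd cycle C_ℓ has no rank-m projective representation in dimension 2m. -/
open scoped Classical ComplexOrder Kronecker
noncomputable section

/-- The cycle graph on `ZMod n`, where `j` is adjacent to `j ± 1`. -/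
def cycGraph (n : ℕ) : SimpleGraph (ZMod n) where
  Adj j k := j ≠ k ∧ (k = j + 1 ∨ j = k + 1)
  symm := ⟨fun _ _ h => ⟨h.1.symm, h.2.symm⟩⟩
  loopless := ⟨fun _ h => h.1 rfl⟩

/-!
Hermitian projections with `P j * P (j + 1) = 0` also satisfy `P (j + 1) * P j = 0`, so the
range of `P (j + 1)` lies in the kernel of `P j`; both have dimension `m`, hence they coincide and
`P (j + 1) = 1 - P j`. Going once around a cycle of odd length flips `P 0` an odd number of
times, so `P 0 = 1 - P 0`, which forces the idempotent `P 0` to vanish, contradicting rank `m ≥ 1`.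
-/

open Module in
theorem LinearMap.eq_one_sub_of_mul_eq_zero {K V : Type*} [Field K] [AddCommGroup V]
    [Module K V] [FiniteDimensional K V] {p q : V →ₗ[K] V}
    (hp : IsIdempotentElem p) (hq : IsIdempotentElem q) (hpq : p * q = 0) (hqp : q * p = 0)
    (hrank : finrank K (range p) + finrank K (range q) = finrank K V) :
    q = 1 - p := by
  have hrange : range q = ker p :=
    Submodule.eq_of_le_of_finrank_eq (range_le_ker_iff.mpr hpq) (by
      have := p.finrank_range_add_finrank_ker
      omega)
  have hfix : q * (1 - p) = 1 - p :=
    (IsIdempotentElem.comp_eq_right_iff hq (1 - p)).mpr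
      (IsIdempotentElem.ker_eq_range_one_sub hp ▸ hrange.ge)
  calc q = q * (1 - p) := by rw [mul_sub, hqp, mul_one, sub_zero]
    _ = 1 - p := hfix

theorem Matrix.eq_one_sub_of_mul_eq_zero {K n : Type*} [Field K] [Fintype n] [DecidableEq n]
    {A B : Matrix n n K} (hA : IsIdempotentElem A) (hB : IsIdempotentElem B)
    (hAB : A * B = 0) (hBA : B * A = 0) (hrank : A.rank + B.rank = Fintype.card n) :
    B = 1 - A := by
  let e := Matrix.toLinAlgEquiv' (R := K) (n := n)
  apply e.injective
  rw [map_sub, map_one]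
  refine LinearMap.eq_one_sub_of_mul_eq_zero (hA.map e) (hB.map e)
    (by rw [← map_mul, hAB, map_zero]) (by rw [← map_mul, hBA, map_zero]) ?_
  rwa [Module.finrank_fintype_fun_eq_card]

theorem ZMod.eq_of_odd_of_forall_succ_eq {α : Type*} {ℓ : ℕ} (hodd : Odd ℓ) {σ : α → α}
    (hσ : Function.Involutive σ) {f : ZMod ℓ → α} (hf : ∀ j, f (j + 1) = σ (f j)) :
    f 0 = σ (f 0) := by
  have heven : ∀ t : ℕ, f ((2 * t : ℕ) : ZMod ℓ) = f 0 := by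
    intro t
    induction t with
    | zero => simp
    | succ t ih =>
      rw [show ((2 * (t + 1) : ℕ) : ZMod ℓ) = (2 * t : ℕ) + 1 + 1 by push_cast; ring,
        hf, hf, hσ, ih]
  obtain ⟨t, ht⟩ := hodd
  calc f 0 = f ((2 * t + 1 : ℕ) : ZMod ℓ) := by rw [← ht, ZMod.natCast_self]
    _ = σ (f 0) := by rw [Nat.cast_succ, hf, heven]

theorem IsIdempotentElem.eq_zero_of_eq_one_sub {R : Type*} [Ring R] {e : R}
    (he : IsIdempotentElem e) (h : e = 1 - e) : e = 0 :=
  calc e = e * e := he.symm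
    _ = e * (1 - e) := by nth_rw 2 [h]
    _ = 0 := he.mul_one_sub_self

theorem no_half_rank_PR_odd_cycle_general (ℓ m : ℕ) (hodd : Odd ℓ)
    (hm : 1 ≤ m)
    (P : ZMod ℓ → Matrix (Fin (2 * m)) (Fin (2 * m)) ℂ)
    (hherm : ∀ j, (P j).IsHermitian) (hidem : ∀ j, P j * P j = P j)
    (hrank : ∀ j, (P j).rank = m)
    (horth : ∀ j, P j * P (j + 1) = 0) :
    False := by
  have hnext : ∀ j, P (j + 1) = 1 - P j := fun j =>
    Matrix.eq_one_sub_of_mul_eq_zero (hidem j) (hidem (j + 1)) (horth j)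
      (((hherm j).isSelfAdjoint.commute_of_mul_eq_zero (hherm (j + 1)).isSelfAdjoint
        (horth j)).eq.symm.trans (horth j))
      (by rw [hrank, hrank, Fintype.card_fin, two_mul])
  have hzero : P 0 = 0 := IsIdempotentElem.eq_zero_of_eq_one_sub (hidem 0)
    (ZMod.eq_of_odd_of_forall_succ_eq hodd (sub_sub_cancel 1) hnext)
  have := hrank 0
  rw [hzero, Matrix.rank_zero] at this
  omega

theorem no_half_rank_PR_odd_cycle (ℓ m : ℕ) (hℓ : 1 < ℓ) (hodd : Odd ℓ)
    (hm : 1 ≤ m)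
    (P : ZMod ℓ → Matrix (Fin (2 * m)) (Fin (2 * m)) ℂ)
    (hherm : ∀ j, (P j).IsHermitian) (hidem : ∀ j, P j * P j = P j)
    (hrank : ∀ j, (P j).rank = m)
    (horth : ∀ j, P j * P (j + 1) = 0) :
    False :=
  no_half_rank_PR_odd_cycle_general ℓ m hodd hm P hherm hidem hrank horth
end
end

section
/- Let G be a finite simple graph with fractional chromatic number χ_f(G) and clique number ω(G), and set κ = 2(χ_f(G) − ω(G)). Assume 0 < κ < 1, let r be a positive integer with r < 1/κ, and let k be a positive integer with k ≥ rχ_f(G)/(1 − rκ). Then for every rank-r projective representation (Π_x)_{x∈V(G∨C_{2k+1})} of the disjunctive product G∨C_{2k+1} in any dimension d, every weight function w : V(G∨C_{2k+1}) → ℝ≥0 satisfying Σ_{x∈I} w_x ≤ 1 for every independent set I of G∨C_{2k+1}, and every real η with Σ_x w_x Π_x ≥ η·𝟙 in the Loewner order, one has η ≤ 1. -/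
/-!
Taking traces in `∑ w_x Π_x ≥ η 𝟙` gives `η d ≤ r ∑ w`. Pairing a fractional colouring of `G`
with the colouring of `C_{2k+1}` by its `2k+1` independent sets `{j, j + 2, …, j + 2(k-1)}`,
each of weight `1/k`, gives `k ∑ w ≤ (2k+1) χ_f(G)`.

For a maximum clique `C` of `G`, the set `C × {0, 1}` is a clique of `G ∨ C_{2k+1}`, so its
projections are pairwise orthogonal and `2ωr ≤ d`. Equality is impossible: the projections would
then sum to `𝟙`, so for `a ∈ C` every `Π_(a,c)` lies under `E = Π_(a,0) + Π_(a,1)`, of rank `2r`,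
which forces `Π_(a,c+1) = E - Π_(a,c)`. Hence `c ↦ Π_(a,c)` has period `2`, so period `1` on the
odd cycle, contradicting `Π_(a,c) Π_(a,c+1) = 0`. With `d ≥ 2ωr + 1`, the hypothesis on `k` is
exactly `r (2k+1) χ_f(G) ≤ k (2ωr + 1)`, and `η ≤ 1` follows.
-/

open scoped Classical ComplexOrder Kronecker
noncomputable section

/-- The finset of all independent finsets of vertices of `G`. -/
def indepFinsets {α : Type*} [Fintype α] (G : SimpleGraph α) : Finset (Finset α) :=
  Finset.univ.filter fun I => IsIndep G ↑I

/-- A fractional coloring for weights `w`: a nonnegative value on each independent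
set such that, for each vertex, the total value of the independent sets containing
it is at least its weight. -/
def IsFracColoring {α : Type*} [Fintype α] (G : SimpleGraph α) (w : α → ℝ)
    (z : Finset α → ℝ) : Prop :=
  (∀ I, 0 ≤ z I) ∧
    ∀ v, w v ≤ ∑ I ∈ (indepFinsets G).filter (fun I => v ∈ I), z I

/-- The weighted fractional chromatic number. -/
def fracChromW {α : Type*} [Fintype α] (G : SimpleGraph α) (w : α → ℝ) : ℝ :=
  sInf {x | ∃ z : Finset α → ℝ, IsFracColoring G w z ∧ x = ∑ I ∈ indepFinsets G, z I}

/-- The (unweighted) fractional chromatic number. -/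
def fracChrom {α : Type*} [Fintype α] (G : SimpleGraph α) : ℝ :=
  fracChromW G fun _ => 1

theorem Function.Periodic.one_of_two_zmod {X : Type*} {k : ℕ} {f : ZMod (2 * k + 1) → X}
    (h : Function.Periodic f 2) : Function.Periodic f 1 := by
  have h1 : ((k + 1 : ℕ) : ZMod (2 * k + 1)) * 2 = 1 := by
    have := ZMod.natCast_self (2 * k + 1)
    push_cast at this ⊢
    linear_combination this
  exact h1 ▸ h.nat_mul (k + 1)

theorem IsIdempotentElem.sum {R ι : Type*} [NonUnitalNonAssocSemiring R] {s : Finset ι}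
    {p : ι → R} (hp : ∀ i ∈ s, IsIdempotentElem (p i))
    (hps : (s : Set ι).Pairwise fun i j => p i * p j = 0) :
    IsIdempotentElem (∑ i ∈ s, p i) := by
  rw [IsIdempotentElem, Finset.sum_mul_sum]
  refine Finset.sum_congr rfl fun i hi => ?_
  rw [Finset.sum_eq_single_of_mem i hi fun j hj hji => hps hi hj hji.symm, (hp i hi).eq]

namespace Matrix
variable {K n : Type*} [Field K] [Fintype n] [DecidableEq n]

theorem eq_zero_of_rank_eq_zero {A : Matrix n n K} (h : A.rank = 0) : A = 0 := by
  rw [rank, Submodule.finrank_eq_zero, LinearMap.range_eq_bot] at h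
  exact toLin'.injective (by rw [map_zero]; exact h)

theorem trace_eq_rank_of_isIdempotentElem {A : Matrix n n K} (hA : IsIdempotentElem A) :
    A.trace = A.rank := by
  have hlin : IsIdempotentElem (toLin' A) := by
    rw [IsIdempotentElem, Module.End.mul_eq_comp, ← toLin'_mul, hA.eq]
  rw [← trace_toLin'_eq, (LinearMap.IsIdempotentElem.isProj_range _ hlin).trace,
    rank, toLin'_apply']

variable [CharZero K]

theorem rank_sum_of_isIdempotentElem {ι : Type*} {s : Finset ι} {P : ι → Matrix n n K}
    (hP : ∀ i ∈ s, IsIdempotentElem (P i))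
    (hPs : (s : Set ι).Pairwise fun i j => P i * P j = 0) :
    (∑ i ∈ s, P i).rank = ∑ i ∈ s, (P i).rank := by
  apply Nat.cast_injective (R := K)
  rw [← trace_eq_rank_of_isIdempotentElem (IsIdempotentElem.sum hP hPs), trace_sum,
    Nat.cast_sum]
  exact Finset.sum_congr rfl fun i hi => trace_eq_rank_of_isIdempotentElem (hP i hi)

theorem rank_sub_add_rank_of_isIdempotentElem {P Q : Matrix n n K} (hP : IsIdempotentElem P)
    (hQ : IsIdempotentElem Q) (hPQ : P * Q = P) (hQP : Q * P = P) :
    (Q - P).rank + P.rank = Q.rank := by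
  apply Nat.cast_injective (R := K)
  rw [Nat.cast_add, ← trace_eq_rank_of_isIdempotentElem hQ,
    ← trace_eq_rank_of_isIdempotentElem hP,
    ← trace_eq_rank_of_isIdempotentElem (hP.sub hQ hPQ hQP), ← trace_add, sub_add_cancel]

theorem eq_of_isIdempotentElem_of_rank_le {P Q : Matrix n n K} (hP : IsIdempotentElem P)
    (hQ : IsIdempotentElem Q) (hPQ : P * Q = P) (hQP : Q * P = P) (hrank : Q.rank ≤ P.rank) :
    P = Q := by
  have := rank_sub_add_rank_of_isIdempotentElem hP hQ hPQ hQP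
  exact (sub_eq_zero.mp (eq_zero_of_rank_eq_zero (by omega))).symm

theorem eq_zero_of_oddCycle {k r : ℕ} {E : Matrix n n K} {P : ZMod (2 * k + 1) → Matrix n n K}
    (hE : IsIdempotentElem E) (hP : ∀ c, IsIdempotentElem (P c))
    (hPE : ∀ c, P c * E = P c) (hEP : ∀ c, E * P c = P c)
    (hPP : ∀ c, P c * P (c + 1) = 0) (hPP' : ∀ c, P (c + 1) * P c = 0)
    (hrank : ∀ c, (P c).rank = r) (hE_rank : E.rank = 2 * r) (c : ZMod (2 * k + 1)) :
    P c = 0 := by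
  have hstep : ∀ c, P (c + 1) = E - P c := fun c => by
    have := rank_sub_add_rank_of_isIdempotentElem (hP c) hE (hPE c) (hEP c)
    refine eq_of_isIdempotentElem_of_rank_le (hP (c + 1)) ((hP c).sub hE (hPE c) (hEP c))
      (by rw [mul_sub, hPE, hPP', sub_zero]) (by rw [sub_mul, hEP, hPP, sub_zero]) ?_
    rw [hrank] at this ⊢
    omega
  have hperiodic : Function.Periodic P 1 := Function.Periodic.one_of_two_zmod fun c => by
    rw [show c + 2 = c + 1 + 1 by ring, hstep, hstep, sub_sub_cancel]
  rw [← (hP c).eq]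
  nth_rw 2 [← hperiodic c]
  exact hPP c

end Matrix

theorem ZMod.natCast_injOn (n : ℕ) : Set.InjOn (Nat.cast : ℕ → ZMod n) (Set.Iio n) :=
  fun a ha b hb h => by
    rwa [ZMod.natCast_eq_natCast_iff', Nat.mod_eq_of_lt ha, Nat.mod_eq_of_lt hb] at h

theorem cycGraph_adj_add_one {n : ℕ} [Nontrivial (ZMod n)] (c : ZMod n) :
    (cycGraph n).Adj c (c + 1) :=
  ⟨by simp, Or.inl rfl⟩

def cycGraphIndepSet (k : ℕ) (j : ZMod (2 * k + 1)) : Finset (ZMod (2 * k + 1)) :=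
  (Finset.range k).image fun i => j + (2 * i : ℕ)

theorem isIndep_cycGraphIndepSet (k : ℕ) (j : ZMod (2 * k + 1)) :
    IsIndep (cycGraph (2 * k + 1)) ↑(cycGraphIndepSet k j) := by
  have hne : ∀ i < k, ∀ i' < k, j + (2 * i' : ℕ) ≠ j + (2 * i : ℕ) + 1 := by
    intro i hi i' hi' h
    have := ZMod.natCast_injOn (2 * k + 1) (show 2 * i' < 2 * k + 1 by omega)
      (show 2 * i + 1 < 2 * k + 1 by omega) (by push_cast at h ⊢; linear_combination h)
    omega
  simp only [IsIndep, cycGraphIndepSet, Finset.coe_image, Finset.coe_range]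
  rintro _ ⟨i, hi, rfl⟩ _ ⟨i', hi', rfl⟩ - ⟨-, h | h⟩
  exacts [hne i hi i' hi' h, hne i' hi' i hi h]

theorem card_filter_mem_cycGraphIndepSet (k : ℕ) (c : ZMod (2 * k + 1))
    [DecidablePred fun j => c ∈ cycGraphIndepSet k j] :
    (Finset.univ.filter fun j => c ∈ cycGraphIndepSet k j).card = k := by
  have : Finset.univ.filter (fun j => c ∈ cycGraphIndepSet k j) =
      (Finset.range k).image fun i => c - (2 * i : ℕ) := by
    ext j
    simp only [cycGraphIndepSet, Finset.mem_filter, Finset.mem_univ, true_and,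
      Finset.mem_image, Finset.mem_range, sub_eq_iff_eq_add]
    exact exists_congr fun _ => and_congr_right fun _ => eq_comm
  rw [this, Finset.card_image_of_injOn, Finset.card_range]
  intro i hi i' hi' h
  simp only [Finset.coe_range, Set.mem_Iio] at hi hi'
  have := ZMod.natCast_injOn (2 * k + 1) (show 2 * i < 2 * k + 1 by omega)
    (show 2 * i' < 2 * k + 1 by omega) (sub_right_inj.mp h)
  omega

theorem IsIndep.disjProd {α β : Type*} {G : SimpleGraph α} {H : SimpleGraph β} {s : Set α}
    {t : Set β} (hs : IsIndep G s) (ht : IsIndep H t) : IsIndep (disjProd G H) (s ×ˢ t) := by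
  rintro ⟨a, b⟩ ⟨ha, hb⟩ ⟨a', b'⟩ ⟨ha', hb'⟩ hne (hadj | hadj)
  · exact hs ha ha' (G.ne_of_adj hadj) hadj
  · exact ht hb hb' (H.ne_of_adj hadj) hadj

theorem SimpleGraph.IsClique.disjProd {α β : Type*} {G : SimpleGraph α} {H : SimpleGraph β}
    {s : Set α} {t : Set β} (hs : G.IsClique s) (ht : H.IsClique t) :
    (disjProd G H).IsClique (s ×ˢ t) := by
  rintro ⟨a, b⟩ ⟨ha, hb⟩ ⟨a', b'⟩ ⟨ha', hb'⟩ hne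
  by_cases haa : a = a'
  · subst haa
    exact Or.inr (ht hb hb' fun h => hne (Prod.ext rfl h))
  · exact Or.inl (hs ha ha' haa)

theorem SimpleGraph.cliqueNum_pos {α : Type*} [Finite α] [Nonempty α] (G : SimpleGraph α) :
    0 < G.cliqueNum := by
  obtain ⟨a⟩ := ‹Nonempty α›
  exact (Finset.card_singleton a).symm.trans_le (IsClique.card_le_cliqueNum (tc := by simp))

theorem isFracColoring_one {α : Type*} [Fintype α] (G : SimpleGraph α) :
    IsFracColoring G (fun _ => 1) fun _ => 1 := by
  refine ⟨fun _ => zero_le_one, fun v => ?_⟩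
  have hv : {v} ∈ (indepFinsets G).filter (fun I => v ∈ I) :=
    Finset.mem_filter.mpr ⟨Finset.mem_filter.mpr ⟨Finset.mem_univ _, by simp [IsIndep]⟩,
      Finset.mem_singleton_self v⟩
  rw [Finset.sum_const, nsmul_one]
  exact Nat.one_le_cast.mpr (Finset.card_pos.mpr ⟨_, hv⟩)

theorem le_fracChrom {α : Type*} [Fintype α] {G : SimpleGraph α} {c : ℝ}
    (h : ∀ z, IsFracColoring G (fun _ => 1) z → c ≤ ∑ I ∈ indepFinsets G, z I) :
    c ≤ fracChrom G :=
  le_csInf ⟨_, _, isFracColoring_one G, rfl⟩ (by rintro _ ⟨z, hz, rfl⟩; exact h z hz)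

theorem nonempty_of_fracChrom_pos {α : Type*} [Fintype α] {G : SimpleGraph α}
    (h : 0 < fracChrom G) : Nonempty α := by
  by_contra hα
  have : IsEmpty α := not_nonempty_iff.mp hα
  refine h.not_ge (csInf_le ⟨0, ?_⟩ ⟨0, ⟨fun _ => le_rfl, isEmptyElim⟩, by simp⟩)
  rintro _ ⟨z, hz, rfl⟩
  exact Finset.sum_nonneg fun I _ => hz.1 I

theorem sum_le_mul_of_fractional_covers {α β ι κ : Type*} [Fintype α] [Fintype β]
    {G : SimpleGraph α} {H : SimpleGraph β} {s : Finset ι} {t : Finset κ}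
    {A : ι → Finset α} {B : κ → Finset β} {z : ι → ℝ} {y : κ → ℝ}
    (hA : ∀ i ∈ s, IsIndep G ↑(A i)) (hB : ∀ j ∈ t, IsIndep H ↑(B j))
    (hz : ∀ i ∈ s, 0 ≤ z i) (hy : ∀ j ∈ t, 0 ≤ y j)
    (hzA : ∀ a, 1 ≤ ∑ i ∈ s with a ∈ A i, z i) (hyB : ∀ b, 1 ≤ ∑ j ∈ t with b ∈ B j, y j)
    {w : α × β → ℝ} (hw0 : ∀ x, 0 ≤ w x)
    (hwI : ∀ I : Finset (α × β), IsIndep (disjProd G H) ↑I → ∑ x ∈ I, w x ≤ 1) :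
    ∑ x, w x ≤ (∑ i ∈ s, z i) * ∑ j ∈ t, y j := by
  calc ∑ x, w x
      ≤ ∑ x, w x * ((∑ i ∈ s with x.1 ∈ A i, z i) * ∑ j ∈ t with x.2 ∈ B j, y j) :=
        Finset.sum_le_sum fun x _ =>
          le_mul_of_one_le_right (hw0 x) (one_le_mul_of_one_le_of_one_le (hzA _) (hyB _))
    _ = ∑ x, ∑ i ∈ s, ∑ j ∈ t, if x ∈ A i ×ˢ B j then z i * y j * w x else 0 := by
        refine Finset.sum_congr rfl fun x _ => ?_
        rw [Finset.sum_filter, Finset.sum_filter, Finset.sum_mul_sum]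
        simp_rw [Finset.mul_sum]
        refine Finset.sum_congr rfl fun i _ => Finset.sum_congr rfl fun j _ => ?_
        by_cases ha : x.1 ∈ A i <;> by_cases hb : x.2 ∈ B j <;>
          simp only [ha, hb, Finset.mem_product, if_true, if_false, and_true, and_false,
            mul_zero, zero_mul]
        ring
    _ = ∑ i ∈ s, ∑ j ∈ t, z i * y j * ∑ x ∈ A i ×ˢ B j, w x := by
        rw [Finset.sum_comm]
        refine Finset.sum_congr rfl fun i _ => ?_
        rw [Finset.sum_comm]
        refine Finset.sum_congr rfl fun j _ => ?_
        rw [Finset.mul_sum, Finset.sum_ite_mem, Finset.univ_inter]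
    _ ≤ ∑ i ∈ s, ∑ j ∈ t, z i * y j * 1 := by
        gcongr with i hi j hj
        · exact mul_nonneg (hz i hi) (hy j hj)
        · exact hwI _ (by rw [Finset.coe_product]; exact (hA i hi).disjProd (hB j hj))
    _ = (∑ i ∈ s, z i) * ∑ j ∈ t, y j := by simp only [mul_one, Finset.sum_mul_sum]

theorem sum_le_fracChrom_mul {α : Type*} [Fintype α] (G : SimpleGraph α) {k : ℕ} (hk : 1 ≤ k)
    {w : α × ZMod (2 * k + 1) → ℝ} (hw0 : ∀ x, 0 ≤ w x)
    (hwI : ∀ I : Finset (α × ZMod (2 * k + 1)),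
      IsIndep (disjProd G (cycGraph (2 * k + 1))) ↑I → ∑ x ∈ I, w x ≤ 1) :
    (k : ℝ) * ∑ x, w x ≤ (2 * k + 1) * fracChrom G := by
  have hk' : (0 : ℝ) < k := by exact_mod_cast hk
  rw [← div_le_iff₀' (by positivity)]
  refine le_fracChrom fun z hz => (div_le_iff₀' (by positivity)).2 ?_
  have := sum_le_mul_of_fractional_covers (s := indepFinsets G) (t := Finset.univ) (A := id)
    (B := cycGraphIndepSet k) (y := fun _ => (k : ℝ)⁻¹)
    (fun I hI => (Finset.mem_filter.mp hI).2) (fun j _ => isIndep_cycGraphIndepSet k j)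
    (fun I _ => hz.1 I) (fun _ _ => by positivity) hz.2
    (fun c => by rw [Finset.sum_const, card_filter_mem_cycGraphIndepSet, nsmul_eq_mul,
      mul_inv_cancel₀ hk'.ne']) hw0 hwI
  rw [Finset.sum_const, Finset.card_univ, ZMod.card, nsmul_eq_mul] at this
  calc (k : ℝ) * ∑ x, w x
      ≤ k * ((∑ I ∈ indepFinsets G, z I) * ((2 * k + 1 : ℕ) * (k : ℝ)⁻¹)) := by gcongr
    _ = (2 * k + 1) * ∑ I ∈ indepFinsets G, z I := by
        field_simp
        push_cast
        ring

theorem cycGraph_isClique_zero_one {n : ℕ} [Nontrivial (ZMod n)] :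
    (cycGraph n).IsClique ↑({0, 1} : Finset (ZMod n)) := by
  simpa using SimpleGraph.isClique_pair.mpr fun _ => cycGraph_adj_add_one (n := n) 0

theorem sum_clique_prod_edge_ne_one {K n α : Type*} [Field K] [CharZero K] [Fintype n]
    [DecidableEq n] {G : SimpleGraph α} {k r : ℕ} (hk : 1 ≤ k) (hr : 1 ≤ r)
    {P : α × ZMod (2 * k + 1) → Matrix n n K} (hP : ∀ x, IsIdempotentElem (P x))
    (hrank : ∀ x, (P x).rank = r)
    (horth : ∀ x y, (disjProd G (cycGraph (2 * k + 1))).Adj x y → P x * P y = 0)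
    {C : Finset α} (hC : G.IsClique ↑C) {a : α} (ha : a ∈ C) :
    ∑ x ∈ C ×ˢ {0, 1}, P x ≠ 1 := by
  intro hF1
  have : Fact (1 < 2 * k + 1) := ⟨by omega⟩
  have hpair : (({0, 1} : Finset (ZMod (2 * k + 1))) : Set _).Pairwise
      fun i j => P (a, i) * P (a, j) = 0 :=
    (cycGraph_isClique_zero_one (n := 2 * k + 1)).mono' fun i j h => horth _ _ (Or.inr h)
  set E := ∑ i ∈ {0, 1}, P (a, i)
  have hE : IsIdempotentElem E := IsIdempotentElem.sum (fun i _ => hP _) hpair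
  have hErank : E.rank = 2 * r := by
    rw [Matrix.rank_sum_of_isIdempotentElem (fun i _ => hP _) hpair,
      Finset.sum_congr rfl fun i _ => hrank _, Finset.sum_const, Finset.card_pair zero_ne_one,
      smul_eq_mul]
  set R := ∑ b ∈ C.erase a, ∑ i ∈ {0, 1}, P (b, i)
  have hER : E + R = 1 :=
    (Finset.add_sum_erase _ _ ha).trans ((Finset.sum_product _ _ _).symm.trans hF1)
  have hadj : ∀ b ∈ C.erase a, G.Adj a b := fun b hb =>
    hC ha (Finset.mem_of_mem_erase hb) (Finset.ne_of_mem_erase hb).symm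
  have hPE : ∀ c, P (a, c) * E = P (a, c) := fun c => by
    have hPR : P (a, c) * R = 0 := by
      simp only [R, Finset.mul_sum]
      exact Finset.sum_eq_zero fun b hb =>
        Finset.sum_eq_zero fun i _ => horth _ _ (Or.inl (hadj b hb))
    rw [← add_zero (P (a, c) * E), ← hPR, ← mul_add, hER, mul_one]
  have hEP : ∀ c, E * P (a, c) = P (a, c) := fun c => by
    have hRP : R * P (a, c) = 0 := by
      simp only [R, Finset.sum_mul]
      exact Finset.sum_eq_zero fun b hb =>
        Finset.sum_eq_zero fun i _ => horth _ _ (Or.inl (hadj b hb).symm)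
    rw [← add_zero (E * P (a, c)), ← hRP, ← add_mul, hER, one_mul]
  have h0 := Matrix.eq_zero_of_oddCycle hE (fun c => hP (a, c)) hPE hEP
    (fun c => horth _ _ (Or.inr (cycGraph_adj_add_one c)))
    (fun c => horth _ _ (Or.inr (cycGraph_adj_add_one c).symm)) (fun c => hrank _) hErank 0
  have := hrank (a, 0)
  rw [h0, Matrix.rank_zero] at this
  omega

theorem two_mul_cliqueNum_mul_lt_card {K n α : Type*} [Field K] [CharZero K] [Fintype n]
    [DecidableEq n] [Finite α] [Nonempty α] (G : SimpleGraph α) {k r : ℕ} (hk : 1 ≤ k)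
    (hr : 1 ≤ r) {P : α × ZMod (2 * k + 1) → Matrix n n K} (hP : ∀ x, IsIdempotentElem (P x))
    (hrank : ∀ x, (P x).rank = r)
    (horth : ∀ x y, (disjProd G (cycGraph (2 * k + 1))).Adj x y → P x * P y = 0) :
    2 * G.cliqueNum * r < Fintype.card n := by
  have : Fact (1 < 2 * k + 1) := ⟨by omega⟩
  obtain ⟨C, hC⟩ := G.exists_isNClique_cliqueNum
  have hQ := hC.isClique.disjProd (cycGraph_isClique_zero_one (n := 2 * k + 1))
  rw [← Finset.coe_product] at hQ
  set F := ∑ x ∈ C ×ˢ {0, 1}, P x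
  have hF : IsIdempotentElem F := IsIdempotentElem.sum (fun x _ => hP x) (hQ.mono' horth)
  have hFrank : F.rank = 2 * G.cliqueNum * r := by
    rw [Matrix.rank_sum_of_isIdempotentElem (fun x _ => hP x) (hQ.mono' horth),
      Finset.sum_congr rfl fun x _ => hrank x, Finset.sum_const, Finset.card_product, hC.card_eq,
      Finset.card_pair zero_ne_one, smul_eq_mul]
    ring
  refine lt_of_le_of_ne (hFrank ▸ F.rank_le_card_width) fun hcard => ?_
  obtain ⟨a, ha⟩ : C.Nonempty := by
    rw [← Finset.card_pos, hC.card_eq]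
    exact G.cliqueNum_pos
  exact sum_clique_prod_edge_ne_one hk hr hP hrank horth hC.isClique ha
    (Matrix.eq_of_isIdempotentElem_of_rank_le hF IsIdempotentElem.one (mul_one F) (one_mul F)
      (by rw [Matrix.rank_one, hFrank, hcard]))

theorem mul_card_le_mul_sum_of_posSemidef {n ι : Type*} [Fintype n] [DecidableEq n] [Fintype ι]
    {r : ℕ} {P : ι → Matrix n n ℂ} (hP : ∀ x, IsIdempotentElem (P x))
    (hrank : ∀ x, (P x).rank = r) {w : ι → ℝ} {η : ℝ}
    (hη : (∑ x, (w x : ℂ) • P x - (η : ℂ) • 1).PosSemidef) :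
    η * Fintype.card n ≤ r * ∑ x, w x := by
  have htrace := hη.trace_nonneg
  simp only [Matrix.trace_sub, Matrix.trace_sum, Matrix.trace_smul, Matrix.trace_one,
    Matrix.trace_eq_rank_of_isIdempotentElem (hP _), hrank, smul_eq_mul] at htrace
  have : (0 : ℂ) ≤ ((r * ∑ x, w x - η * Fintype.card n : ℝ) : ℂ) := by
    push_cast
    rwa [← Finset.sum_mul, mul_comm] at htrace
  linarith [Complex.zero_le_real.mp this]

theorem no_low_rank_SIC_general {α : Type*} [Fintype α] (G : SimpleGraph α)
    (κ : ℝ) (hκdef : κ = 2 * (fracChrom G - (G.cliqueNum : ℝ)))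
    (hκ0 : 0 < κ)
    (r : ℕ) (hr : 1 ≤ r) (hrκ : (r : ℝ) < 1 / κ)
    (k : ℕ) (hk : 1 ≤ k) (hkge : (r : ℝ) * fracChrom G / (1 - (r : ℝ) * κ) ≤ (k : ℝ))
    (d : ℕ)
    (P : α × ZMod (2 * k + 1) → Matrix (Fin d) (Fin d) ℂ)
    (hidem : ∀ x, P x * P x = P x)
    (hrank : ∀ x, (P x).rank = r)
    (horth : ∀ x y, (disjProd G (cycGraph (2 * k + 1))).Adj x y → P x * P y = 0)
    (w : α × ZMod (2 * k + 1) → ℝ) (hw0 : ∀ x, 0 ≤ w x)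
    (hwI : ∀ I : Finset (α × ZMod (2 * k + 1)),
      IsIndep (disjProd G (cycGraph (2 * k + 1))) ↑I → ∑ x ∈ I, w x ≤ 1)
    (η : ℝ)
    (hη : Matrix.PosSemidef (∑ x, (w x : ℂ) • P x - (η : ℂ) • 1)) :
    η ≤ 1 := by
  have : Nonempty α := nonempty_of_fracChrom_pos (by linarith [G.cliqueNum.cast_nonneg (α := ℝ)])
  have hd : 2 * G.cliqueNum * r + 1 ≤ d := by
    simpa using two_mul_cliqueNum_mul_lt_card G hk hr hidem hrank horth
  have htrace : η * d ≤ r * ∑ x, w x := by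
    simpa using mul_card_le_mul_sum_of_posSemidef hidem hrank hη
  have hweight := sum_le_fracChrom_mul G hk hw0 hwI
  have hχ : r * ((2 * k + 1) * fracChrom G) ≤ k * (2 * G.cliqueNum * r + 1) := by
    have : r * κ < 1 := by rwa [lt_div_iff₀ hκ0] at hrκ
    rw [div_le_iff₀ (by linarith), hκdef] at hkge
    linarith
  have hkd : (0 : ℝ) < k * d := by exact_mod_cast Nat.mul_pos (by omega) (by omega)
  refine le_of_mul_le_mul_right (?_ : η * (k * d) ≤ 1 * (k * d)) hkd
  calc η * (k * d) = k * (η * d) := by ring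
    _ ≤ k * (r * ∑ x, w x) := by gcongr
    _ = r * (k * ∑ x, w x) := by ring
    _ ≤ r * ((2 * k + 1) * fracChrom G) := by gcongr
    _ ≤ k * (2 * G.cliqueNum * r + 1) := hχ
    _ ≤ 1 * (k * d) := by rw [one_mul]; gcongr; exact_mod_cast hd

theorem no_low_rank_SIC {α : Type*} [Fintype α] (G : SimpleGraph α)
    (κ : ℝ) (hκdef : κ = 2 * (fracChrom G - (G.cliqueNum : ℝ)))
    (hκ0 : 0 < κ) (hκ1 : κ < 1)
    (r : ℕ) (hr : 1 ≤ r) (hrκ : (r : ℝ) < 1 / κ)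
    (k : ℕ) (hk : 1 ≤ k) (hkge : (r : ℝ) * fracChrom G / (1 - (r : ℝ) * κ) ≤ (k : ℝ))
    (d : ℕ)
    (P : α × ZMod (2 * k + 1) → Matrix (Fin d) (Fin d) ℂ)
    (hherm : ∀ x, (P x).IsHermitian) (hidem : ∀ x, P x * P x = P x)
    (hrank : ∀ x, (P x).rank = r)
    (horth : ∀ x y, (disjProd G (cycGraph (2 * k + 1))).Adj x y → P x * P y = 0)
    (w : α × ZMod (2 * k + 1) → ℝ) (hw0 : ∀ x, 0 ≤ w x)
    (hwI : ∀ I : Finset (α × ZMod (2 * k + 1)),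
      IsIndep (disjProd G (cycGraph (2 * k + 1))) ↑I → ∑ x ∈ I, w x ≤ 1)
    (η : ℝ)
    (hη : Matrix.PosSemidef (∑ x, (w x : ℂ) • P x - (η : ℂ) • 1)) :
    η ≤ 1 :=
  no_low_rank_SIC_general G κ hκdef hκ0 r hr hrκ k hk hkge d P hidem hrank horth w hw0 hwI η hη
end
end

section
/- Let r ≥ 1 and for each j ∈ ZMod(2r+1) define the diagonal (2r+1)×(2r+1) complex matrix Π_j = Σ_{t=0}^{r−1} |jr⊕t⟩⟨jr⊕t|, where ⊕ denotes addition modulo 2r+1 and |m⟩⟨m| is the diagonal matrix with a single 1 in position (m,m). Then each Π_j is an orthogonal projection of rank r, Π_j·Π_{j⊕1} = 0 for every j (so (Π_j) is a rank-r projective representation of the cycle graph C_{2r+1} in dimension 2r+1), and Σ_{j∈ZMod(2r+1)} Π_j = r·𝟙. -/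
open scoped Classical ComplexOrder Kronecker
noncomputable section

/-!
Each `Π_j` is the diagonal projection onto the block `{jr, jr + 1, …, jr + r - 1}` of `r`
consecutive residues mod `2r + 1`. The blocks of `j` and `j + 1` are the two halves of the
interval `[jr, jr + 2r)`, which has length `2r < 2r + 1`, so they are disjoint. Since
`r · (-2) = 1` mod `2r + 1`, the map `j ↦ jr + t` is a bijection for every offset `t`, so every
residue lies in exactly `r` blocks.
-/

open Matrix Finset

section CoordProj

variable {n R : Type*} [DecidableEq n]

variable (R) in
def coordProj [Zero R] [One R] (S : Finset n) : Matrix n n R :=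
  diagonal fun m => if m ∈ S then 1 else 0

theorem sum_single_one_eq_coordProj [Fintype n] [AddCommMonoid R] [One R] (S : Finset n) :
    ∑ m ∈ S, single m m (1 : R) = coordProj R S := by
  simp_rw [coordProj, ← sum_single_eq_diagonal, apply_ite (single _ _), single_zero,
    sum_ite_mem, univ_inter]

theorem coordProj_isHermitian [NonAssocSemiring R] [StarRing R] (S : Finset n) :
    (coordProj R S).IsHermitian := by
  rw [IsHermitian, coordProj, diagonal_conjTranspose]
  congr 1
  ext m
  by_cases h : m ∈ S <;> simp [h]

theorem coordProj_mul_coordProj [Fintype n] [NonAssocSemiring R] (S T : Finset n) :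
    coordProj R S * coordProj R T = coordProj R (S ∩ T) := by
  rw [coordProj, coordProj, coordProj, diagonal_mul_diagonal]
  congr 1
  ext m
  split_ifs <;> simp_all

theorem coordProj_mul_self [Fintype n] [NonAssocSemiring R] (S : Finset n) :
    coordProj R S * coordProj R S = coordProj R S := by
  rw [coordProj_mul_coordProj, inter_self]

theorem coordProj_mul_of_disjoint [Fintype n] [NonAssocSemiring R] {S T : Finset n}
    (h : Disjoint S T) :
    coordProj R S * coordProj R T = 0 := by
  rw [coordProj_mul_coordProj, disjoint_iff_inter_eq_empty.1 h, coordProj]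
  simp

theorem rank_coordProj [Fintype n] [Field R] (S : Finset n) :
    (coordProj R S).rank = #S := by
  classical
  rw [coordProj, rank_diagonal, Fintype.card_subtype]
  congr 1
  ext m
  simp

end CoordProj

section CycleBlock

variable (r : ℕ)

def cycleBlock (j : ZMod (2 * r + 1)) : Finset (ZMod (2 * r + 1)) :=
  (range r).image fun t : ℕ => j * r + t

theorem injOn_mul_natCast_add_natCast (j : ZMod (2 * r + 1)) :
    Set.InjOn (fun t : ℕ => j * r + t) (range r) := by
  intro s hs t ht hst
  refine CharP.natCast_injOn_Iio (ZMod (2 * r + 1)) (2 * r + 1) ?_ ?_ (add_left_cancel hst)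
  · simp only [coe_range, Set.mem_Iio] at hs ⊢; omega
  · simp only [coe_range, Set.mem_Iio] at ht ⊢; omega

theorem card_cycleBlock (j : ZMod (2 * r + 1)) : #(cycleBlock r j) = r := by
  rw [cycleBlock, card_image_of_injOn (injOn_mul_natCast_add_natCast r j), card_range]

theorem disjoint_cycleBlock_add_one (j : ZMod (2 * r + 1)) :
    Disjoint (cycleBlock r j) (cycleBlock r (j + 1)) := by
  simp only [cycleBlock, disjoint_left, mem_image, mem_range, not_exists, not_and]
  rintro _ ⟨t, ht, rfl⟩ s hs hst
  have hcast : ((r + s : ℕ) : ZMod (2 * r + 1)) = t := by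
    push_cast
    linear_combination hst
  have hts : r + s = t := CharP.natCast_injOn_Iio (ZMod (2 * r + 1)) (2 * r + 1)
    (by simp only [Set.mem_Iio]; omega) (by simp only [Set.mem_Iio]; omega) hcast
  omega

theorem natCast_mul_neg_two : (r : ZMod (2 * r + 1)) * (-2) = 1 := by
  have h : ((2 * r + 1 : ℕ) : ZMod (2 * r + 1)) = 0 := ZMod.natCast_self _
  push_cast at h
  linear_combination -h

theorem bijective_mul_natCast_add (c : ZMod (2 * r + 1)) :
    Function.Bijective fun j : ZMod (2 * r + 1) => j * r + c := by
  let u : (ZMod (2 * r + 1))ˣ :=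
    ⟨r, -2, natCast_mul_neg_two r, (mul_comm _ _).trans (natCast_mul_neg_two r)⟩
  exact ((Units.mulRight u).trans (Equiv.addRight c)).bijective

theorem sum_sum_single_mul_natCast_add [Semiring R] :
    ∑ j : ZMod (2 * r + 1), ∑ t ∈ range r, single (j * r + t) (j * r + t) (1 : R) =
      (r : R) • 1 := by
  rw [sum_comm]
  calc ∑ t ∈ range r, ∑ j : ZMod (2 * r + 1), single (j * r + t) (j * r + t) (1 : R)
      = ∑ _t ∈ range r, (1 : Matrix (ZMod (2 * r + 1)) (ZMod (2 * r + 1)) R) :=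
        sum_congr rfl fun t _ =>
          ((bijective_mul_natCast_add r t).sum_comp fun m => single m m 1).trans sum_single_one
    _ = (r : R) • 1 := by rw [sum_const, card_range, Nat.cast_smul_eq_nsmul]

end CycleBlock

theorem cycle_rank_r_PR_general (r : ℕ)
    (P : ZMod (2 * r + 1) → Matrix (ZMod (2 * r + 1)) (ZMod (2 * r + 1)) ℂ)
    (hdef : ∀ j, P j = ∑ t ∈ Finset.range r,
      Matrix.single (j * (r : ZMod (2 * r + 1)) + (t : ZMod (2 * r + 1)))
        (j * (r : ZMod (2 * r + 1)) + (t : ZMod (2 * r + 1))) (1 : ℂ)) :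
    (∀ j, (P j).IsHermitian) ∧ (∀ j, P j * P j = P j) ∧
    (∀ j, (P j).rank = r) ∧
    (∀ j, P j * P (j + 1) = 0) ∧
    (∀ j k, (cycGraph (2 * r + 1)).Adj j k → P j * P k = 0) ∧
    ∑ j, P j = (r : ℂ) • (1 : Matrix (ZMod (2 * r + 1)) (ZMod (2 * r + 1)) ℂ) := by
  have hP : ∀ j, P j = coordProj ℂ (cycleBlock r j) := fun j => by
    rw [hdef, cycleBlock, ← sum_single_one_eq_coordProj,
      sum_image (injOn_mul_natCast_add_natCast r j)]
  have hsucc : ∀ j, P j * P (j + 1) = 0 := fun j => by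
    rw [hP, hP]
    exact coordProj_mul_of_disjoint (disjoint_cycleBlock_add_one r j)
  refine ⟨fun j => hP j ▸ coordProj_isHermitian _, fun j => by rw [hP, coordProj_mul_self],
    fun j => by rw [hP, rank_coordProj, card_cycleBlock], hsucc, ?_, ?_⟩
  · rintro j k ⟨-, rfl | rfl⟩
    · exact hsucc j
    · rw [hP, hP]
      exact coordProj_mul_of_disjoint (disjoint_cycleBlock_add_one r k).symm
  · simp_rw [hdef]
    exact sum_sum_single_mul_natCast_add r

theorem cycle_rank_r_PR (r : ℕ) (hr : 1 ≤ r)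
    (P : ZMod (2 * r + 1) → Matrix (ZMod (2 * r + 1)) (ZMod (2 * r + 1)) ℂ)
    (hdef : ∀ j, P j = ∑ t ∈ Finset.range r,
      Matrix.single (j * (r : ZMod (2 * r + 1)) + (t : ZMod (2 * r + 1)))
        (j * (r : ZMod (2 * r + 1)) + (t : ZMod (2 * r + 1))) (1 : ℂ)) :
    (∀ j, (P j).IsHermitian) ∧ (∀ j, P j * P j = P j) ∧
    (∀ j, (P j).rank = r) ∧
    (∀ j, P j * P (j + 1) = 0) ∧
    (∀ j k, (cycGraph (2 * r + 1)).Adj j k → P j * P k = 0) ∧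
    ∑ j, P j = (r : ℂ) • (1 : Matrix (ZMod (2 * r + 1)) (ZMod (2 * r + 1)) ℂ) :=
  cycle_rank_r_PR_general r P hdef
end
end

section
/- For every integer r ≥ 2, the independence number of AR(r) equals r: the set {0, 1, …, r−1} ⊆ ZMod(3r−1) is an independent set of AR(r), and every independent set of AR(r) has cardinality at most r. -/
/-!
Two vertices of `AR r` are adjacent exactly when their cyclic distance `|(x - y).valMinAbs|` is
at least `r`, so an independent set is a set of cyclic diameter at most `r - 1`. Centring such a
set at one of its points `a`, the integers `(x - a).valMinAbs` have pairwise differences equal to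
the cyclic distances, because `3 (r - 1) < 3 r - 1` leaves no room to wrap around; hence they lie
in an integer interval of length `r - 1`, which has `r` points.
-/

open scoped Classical ComplexOrder Kronecker
noncomputable section

/-- The circulant graph `AR r` on `ZMod (3r-1)`: `j` and `k` are adjacent iff
`j - k ≡ ±s (mod 3r-1)` for some `s ∈ {r, …, 2r-1}`. -/
def AR (r : ℕ) : SimpleGraph (ZMod (3 * r - 1)) where
  Adj j k := j ≠ k ∧ ∃ s : ℕ, r ≤ s ∧ s ≤ 2 * r - 1 ∧
    (j - k = (s : ZMod (3 * r - 1)) ∨ k - j = (s : ZMod (3 * r - 1)))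
  symm := by
    constructor
    rintro j k ⟨h1, s, hs1, hs2, h3⟩
    exact ⟨h1.symm, s, hs1, hs2, h3.symm⟩
  loopless := by constructor; rintro j ⟨h1, -⟩; exact h1 rfl

theorem Int.card_le_of_forall_sub_le {T : Finset ℤ} {d : ℕ} (hT : ∀ x ∈ T, ∀ y ∈ T, x - y ≤ d) :
    T.card ≤ d + 1 := by
  rcases T.eq_empty_or_nonempty with rfl | hne
  · simp
  have hsub : T ⊆ Finset.Icc (T.min' hne) (T.min' hne + d) := fun x hx =>
    Finset.mem_Icc.mpr ⟨T.min'_le x hx, by linarith [hT x hx _ (T.min'_mem hne)]⟩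
  calc T.card ≤ (Finset.Icc (T.min' hne) (T.min' hne + d)).card := Finset.card_le_card hsub
    _ = d + 1 := by rw [Int.card_Icc]; omega

namespace ZMod

theorem natAbs_valMinAbs_intCast_le {n : ℕ} [NeZero n] (k : ℤ) :
    (k : ZMod n).valMinAbs.natAbs ≤ k.natAbs :=
  natAbs_min_of_le_div_two n _ k (coe_valMinAbs _) (natAbs_valMinAbs_le _)

theorem valMinAbs_sub_sub_valMinAbs_sub {n d : ℕ} (hn : 3 * d < n) {a x y : ZMod n}
    (hx : (x - a).valMinAbs.natAbs ≤ d) (hy : (y - a).valMinAbs.natAbs ≤ d)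
    (hxy : (x - y).valMinAbs.natAbs ≤ d) :
    (x - a).valMinAbs - (y - a).valMinAbs = (x - y).valMinAbs := by
  have hdvd : (n : ℤ) ∣ (x - a).valMinAbs - (y - a).valMinAbs - (x - y).valMinAbs := by
    rw [← ZMod.intCast_zmod_eq_zero_iff_dvd]
    push_cast [coe_valMinAbs]
    ring
  have := Int.eq_zero_of_abs_lt_dvd hdvd (by rw [abs_lt]; constructor <;> omega)
  omega

theorem card_le_of_forall_natAbs_valMinAbs_sub_le {n d : ℕ} (hn : 3 * d < n)
    {S : Finset (ZMod n)} (hS : ∀ x ∈ S, ∀ y ∈ S, (x - y).valMinAbs.natAbs ≤ d) :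
    S.card ≤ d + 1 := by
  rcases S.eq_empty_or_nonempty with rfl | ⟨a, ha⟩
  · simp
  have hinj : Set.InjOn (fun x => (x - a).valMinAbs) S := fun x _ y _ h =>
    sub_left_injective (injective_valMinAbs h)
  rw [← Finset.card_image_of_injOn hinj]
  refine Int.card_le_of_forall_sub_le ?_
  simp only [Finset.forall_mem_image]
  intro x hx y hy
  rw [valMinAbs_sub_sub_valMinAbs_sub hn (hS x hx a ha) (hS y hy a ha) (hS x hx y hy)]
  have := hS x hx y hy
  omega

end ZMod

theorem AR_adj_iff {r : ℕ} (hr : 0 < r) (x y : ZMod (3 * r - 1)) :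
    (AR r).Adj x y ↔ r ≤ (x - y).valMinAbs.natAbs := by
  have : NeZero (3 * r - 1) := ⟨by omega⟩
  have hval (s : ℕ) (hs : r ≤ s) (hs' : s ≤ 2 * r - 1) :
      r ≤ (s : ZMod (3 * r - 1)).valMinAbs.natAbs := by
    rw [ZMod.valMinAbs_natAbs_eq_min, ZMod.val_cast_of_lt (by omega)]
    omega
  constructor
  · rintro ⟨-, s, hs, hs', h | h⟩
    · exact h ▸ hval s hs hs'
    · rw [← neg_sub, ZMod.natAbs_valMinAbs_neg, h]
      exact hval s hs hs'
  · intro h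
    obtain ⟨s, hs⟩ : ∃ s, (x - y).valMinAbs.natAbs = s := ⟨_, rfl⟩
    have hne : x ≠ y := by rintro rfl; simp at h; omega
    have hz := ZMod.coe_valMinAbs (x - y)
    refine ⟨hne, s, hs ▸ h, hs ▸ (ZMod.natAbs_valMinAbs_le _).trans (by omega), ?_⟩
    rcases Int.natAbs_eq (x - y).valMinAbs with h' | h' <;> rw [h', hs] at hz
    · exact Or.inl (by exact_mod_cast hz.symm)
    · exact Or.inr (by rw [← neg_sub x, ← hz]; push_cast; ring)

theorem isIndep_AR_iff {r : ℕ} (hr : 0 < r) (S : Set (ZMod (3 * r - 1))) :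
    IsIndep (AR r) S ↔ ∀ x ∈ S, ∀ y ∈ S, (x - y).valMinAbs.natAbs < r := by
  simp only [IsIndep, Set.Pairwise, AR_adj_iff hr, not_le]
  refine ⟨fun h x hx y hy => ?_, fun h x hx y hy _ => h x hx y hy⟩
  rcases eq_or_ne x y with rfl | hxy
  · simpa using hr
  · exact h hx hy hxy

theorem card_image_natCast_range {n r : ℕ} (hr : r ≤ n) :
    ((Finset.range r).image fun k : ℕ => (k : ZMod n)).card = r := by
  rw [Finset.card_image_of_injOn, Finset.card_range]
  intro a ha b hb hab
  simp only [Finset.coe_range, Set.mem_Iio] at ha hb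
  simpa [ZMod.natCast_eq_natCast_iff', Nat.mod_eq_of_lt (ha.trans_le hr),
    Nat.mod_eq_of_lt (hb.trans_le hr)] using hab

theorem isIndep_AR_image_range {r : ℕ} (hr : 0 < r) :
    IsIndep (AR r) ↑((Finset.range r).image fun n : ℕ => (n : ZMod (3 * r - 1))) := by
  have : NeZero (3 * r - 1) := ⟨by omega⟩
  rw [isIndep_AR_iff hr]
  simp only [Finset.coe_image, Finset.coe_range, Set.forall_mem_image, Set.mem_Iio]
  intro a ha b hb
  have := ZMod.natAbs_valMinAbs_intCast_le (n := 3 * r - 1) ((a : ℤ) - b)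
  push_cast at this
  omega

theorem AR_independence_number (r : ℕ) (hr : 2 ≤ r) :
    IsIndep (AR r)
      ↑((Finset.range r).image fun n : ℕ => (n : ZMod (3 * r - 1))) ∧
    ((Finset.range r).image fun n : ℕ => (n : ZMod (3 * r - 1))).card = r ∧
    ∀ S : Finset (ZMod (3 * r - 1)), IsIndep (AR r) ↑S → S.card ≤ r := by
  have hr₀ : 0 < r := by omega
  refine ⟨isIndep_AR_image_range hr₀, card_image_natCast_range (by omega), fun S hS => ?_⟩
  rw [isIndep_AR_iff hr₀] at hS
  have := ZMod.card_le_of_forall_natAbs_valMinAbs_sub_le (d := r - 1) (by omega)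
    fun x hx y hy => Nat.le_sub_one_of_lt (hS x hx y hy)
  omega
end
end

section
/- For every integer r ≥ 2, the fractional chromatic number of AR(r) equals (3r−1)/r = 3 − 1/r. -/
open scoped Classical ComplexOrder Kronecker
noncomputable section

/-!
An independent set `I` of `AR r` has at most `r` vertices: seen from a fixed `v ∈ I`, its
vertices sit at offsets in `[0, r) ∪ [2r, 3r - 1)`, and folding the second range onto `[1, r)`
by subtracting `2r - 1` is injective on `I`, since two vertices at offset difference `2r - 1`
are adjacent. Double counting then gives every fractional coloring weight at least
`(3r - 1) / r`. Conversely, the `3r - 1` arcs `{j, …, j + r - 1}` are independent and cover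
every vertex exactly `r` times, so weight `1 / r` on each arc is a fractional coloring of that
total weight.
-/

open Finset

section FractionalColoring

variable {α : Type*} [Fintype α] {G : SimpleGraph α}

lemma fracChromW_le_sum {w : α → ℝ} {z : Finset α → ℝ} (hz : IsFracColoring G w z) :
    fracChromW G w ≤ ∑ I ∈ indepFinsets G, z I := by
  refine csInf_le ⟨0, ?_⟩ ⟨z, hz, rfl⟩
  rintro _ ⟨z', hz', rfl⟩
  exact sum_nonneg fun I _ => hz'.1 I

lemma sum_weight_le_mul_sum_of_isFracColoring {w : α → ℝ} {z : Finset α → ℝ} {k : ℕ}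
    (hk : ∀ I ∈ indepFinsets G, #I ≤ k) (hz : IsFracColoring G w z) :
    ∑ v, w v ≤ k * ∑ I ∈ indepFinsets G, z I :=
  calc ∑ v, w v ≤ ∑ v, ∑ I ∈ indepFinsets G with v ∈ I, z I := sum_le_sum fun v _ => hz.2 v
    _ = ∑ I ∈ indepFinsets G, #I * z I := by
      simp_rw [sum_filter]
      rw [sum_comm]
      refine sum_congr rfl fun I _ => ?_
      rw [sum_ite_mem, univ_inter, sum_const, nsmul_eq_mul]
    _ ≤ ∑ I ∈ indepFinsets G, k * z I :=
      sum_le_sum fun I hI => mul_le_mul_of_nonneg_right (by exact_mod_cast hk I hI) (hz.1 I)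
    _ = k * ∑ I ∈ indepFinsets G, z I := (mul_sum _ _ _).symm

lemma div_le_fracChromW {w : α → ℝ} {k : ℕ} (hk0 : 0 < k)
    (hk : ∀ I ∈ indepFinsets G, #I ≤ k) (hne : ∃ z, IsFracColoring G w z) :
    (∑ v, w v) / k ≤ fracChromW G w := by
  obtain ⟨z, hz⟩ := hne
  refine le_csInf ⟨_, z, hz, rfl⟩ ?_
  rintro _ ⟨z', hz', rfl⟩
  rw [div_le_iff₀' (by exact_mod_cast hk0)]
  exact sum_weight_le_mul_sum_of_isFracColoring hk hz'

end FractionalColoring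

section CoverWeight

variable {α ι : Type*} [Fintype ι]

def coverWeight (f : ι → Finset α) (m : ℕ) (I : Finset α) : ℝ :=
  #{i | f i = I} / m

lemma sum_coverWeight (f : ι → Finset α) (m : ℕ) (T : Finset (Finset α)) :
    ∑ I ∈ T, coverWeight f m I = #{i | f i ∈ T} / m := by
  simp only [coverWeight, ← sum_div]
  exact_mod_cast congrArg (fun n : ℕ => (n : ℝ) / m) (sum_card_fiberwise_eq_card_filter _ T f)

variable [Fintype α] {G : SimpleGraph α}

lemma sum_coverWeight_indepFinsets {f : ι → Finset α} (hf : ∀ i, IsIndep G (f i)) (m : ℕ) :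
    ∑ I ∈ indepFinsets G, coverWeight f m I = Fintype.card ι / m := by
  rw [sum_coverWeight, filter_true_of_mem fun i _ => by simp [indepFinsets, hf i], card_univ]

lemma isFracColoring_coverWeight [DecidableEq α] {f : ι → Finset α} {m : ℕ} (hm : 0 < m)
    (hf : ∀ i, IsIndep G (f i)) (hcover : ∀ v, m ≤ #{i | v ∈ f i}) :
    IsFracColoring G (fun _ => 1) (coverWeight f m) := by
  refine ⟨fun I => by unfold coverWeight; positivity, fun v => ?_⟩
  rw [sum_coverWeight, le_div_iff₀ (by exact_mod_cast hm), one_mul, Nat.cast_le]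
  refine (hcover v).trans_eq (congrArg card ?_)
  ext i
  simp [indepFinsets, hf i]

end CoverWeight

namespace AR

variable (r : ℕ) [NeZero (3 * r - 1)]

lemma one_le : 1 ≤ r := by
  have := NeZero.ne (3 * r - 1)
  omega

variable {r}

lemma adj_iff {a b : ZMod (3 * r - 1)} :
    (AR r).Adj a b ↔ r ≤ (a - b).val ∧ (a - b).val ≤ 2 * r - 1 := by
  have hr := one_le r
  constructor
  · rintro ⟨-, s, hs1, hs2, h | h⟩
    · rw [h, ZMod.val_cast_of_lt (by omega)]
      omega
    · have hs0 : (s : ZMod (3 * r - 1)) ≠ 0 := by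
        rw [← ZMod.val_ne_zero, ZMod.val_cast_of_lt (by omega)]
        omega
      rw [← neg_sub, h, ZMod.neg_val, if_neg hs0, ZMod.val_cast_of_lt (by omega)]
      omega
  · rintro ⟨h1, h2⟩
    refine ⟨fun he => ?_, (a - b).val, h1, h2, Or.inl (ZMod.natCast_zmod_val _).symm⟩
    rw [he, sub_self, ZMod.val_zero] at h1
    omega

variable (r)

def arc (j : ZMod (3 * r - 1)) : Finset (ZMod (3 * r - 1)) :=
  {u | (u - j).val < r}

lemma arc_isIndep (j : ZMod (3 * r - 1)) : IsIndep (AR r) (arc r j) := by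
  intro a ha b hb _ hadj
  simp only [arc, coe_filter, mem_univ, true_and, Set.mem_ofPred_eq] at ha hb
  rcases le_total (b - j).val (a - j).val with h | h
  · have := (adj_iff.1 hadj).1
    rw [← sub_sub_sub_cancel_right a b j, ZMod.val_sub h] at this
    omega
  · have := (adj_iff.1 hadj.symm).1
    rw [← sub_sub_sub_cancel_right b a j, ZMod.val_sub h] at this
    omega

lemma card_filter_val_lt : #{d : ZMod (3 * r - 1) | d.val < r} = r := by
  have hr := one_le r
  refine (card_nbij' ZMod.val Nat.cast ?_ ?_ ?_ ?_).trans (card_range r)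
  · intro d hd
    simpa using hd
  · intro i hi
    simp only [coe_range, Set.mem_Iio] at hi
    simp [ZMod.val_cast_of_lt (show i < 3 * r - 1 by omega), hi]
  · intro d _
    exact ZMod.natCast_zmod_val d
  · intro i hi
    simp only [coe_range, Set.mem_Iio] at hi
    exact ZMod.val_cast_of_lt (by omega)

lemma card_filter_mem_arc (v : ZMod (3 * r - 1)) : #{j | v ∈ arc r j} = r := by
  refine (card_equiv (Equiv.subLeft v) fun j => ?_).trans (card_filter_val_lt r)
  simp [arc]

lemma card_le_of_isIndep {I : Finset (ZMod (3 * r - 1))} (hI : IsIndep (AR r) I) : #I ≤ r := by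
  have hr := one_le r
  obtain rfl | ⟨v, hv⟩ := I.eq_empty_or_nonempty
  · simp
  have hfar : ∀ u ∈ I, ∀ u' ∈ I, (u - u').val < r ∨ 2 * r ≤ (u - u').val := by
    intro u hu u' hu'
    by_cases he : u = u'
    · simp only [he, sub_self, ZMod.val_zero]
      omega
    · have := ZMod.val_lt (u - u')
      have := mt adj_iff.2 (hI hu hu' he)
      omega
  let g : ZMod (3 * r - 1) → ℕ := fun u =>
    if (u - v).val < r then (u - v).val else (u - v).val - (2 * r - 1)
  refine (card_le_card_of_injOn g (t := range r) ?_ ?_).trans (card_range r).le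
  · intro u hu
    have := hfar u hu v hv
    have := ZMod.val_lt (u - v)
    simp only [coe_range, Set.mem_Iio, g]
    split_ifs <;> omega
  · intro u hu u' hu' hg
    have hd : (u - v).val = (u' - v).val := by
      wlog h : (u - v).val ≤ (u' - v).val generalizing u u'
      · exact (this hu' hu hg.symm (by omega)).symm
      have := hfar u' hu' u hu
      rw [← sub_sub_sub_cancel_right u' u v, ZMod.val_sub h] at this
      have := hfar u hu v hv
      have := hfar u' hu' v hv
      simp only [g] at hg
      split_ifs at hg <;> omega
    simpa using ZMod.val_injective _ hd

end AR

theorem AR_fracChrom_general (r : ℕ) [NeZero (3 * r - 1)] :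
    fracChrom (AR r) = (3 * (r : ℝ) - 1) / r := by
  have hr := AR.one_le r
  have hcard : (Fintype.card (ZMod (3 * r - 1)) : ℝ) = 3 * r - 1 := by
    rw [ZMod.card, Nat.cast_sub (by omega)]
    push_cast
    ring
  have hcol := isFracColoring_coverWeight hr (AR.arc_isIndep r) fun v =>
    (AR.card_filter_mem_arc r v).ge
  apply le_antisymm
  · calc fracChrom (AR r) ≤ _ := fracChromW_le_sum hcol
      _ = _ := by rw [sum_coverWeight_indepFinsets (AR.arc_isIndep r), hcard]
  · calc (3 * (r : ℝ) - 1) / r = (∑ _v : ZMod (3 * r - 1), (1 : ℝ)) / r := by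
          rw [sum_const, card_univ, nsmul_eq_mul, mul_one, hcard]
      _ ≤ fracChrom (AR r) := div_le_fracChromW hr
          (fun I hI => AR.card_le_of_isIndep r (mem_filter.1 hI).2) ⟨_, hcol⟩

theorem AR_fracChrom (r : ℕ) (hr : 2 ≤ r) [NeZero (3 * r - 1)] :
    fracChrom (AR r) = (3 * (r : ℝ) - 1) / r :=
  AR_fracChrom_general r
end
end

section
/- Let G be a finite simple graph, let (Π_k)_{k∈V(G)} be a rank-r projective representation of G in dimension d, let w : V(G) → ℝ≥0 satisfy Σ_{k∈I} w_k ≤ 1 for every independent set I of G, and let η be a real number with Σ_k w_k Π_k ≥ η·𝟙 in the Loewner order. Then η·d ≤ r·χ_f(G), where χ_f(G) is the fractional chromatic number of G. -/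
/-!
Taking traces in `∑ₖ wₖ Πₖ ≥ η·𝟙` gives `η·d ≤ ∑ₖ wₖ tr Πₖ = r·∑ₖ wₖ`, since the trace of an
idempotent is its rank. Because `w` has weight at most one on every independent set, it is a
feasible solution of the dual of the fractional colouring LP, so weak duality gives
`∑ₖ wₖ ≤ χ_f(G)`.
-/

open scoped Classical ComplexOrder Kronecker
noncomputable section

theorem Matrix.trace_eq_rank_of_isIdempotentElem_s19 {K n : Type*} [Field K] [Fintype n]
    [DecidableEq n] {A : Matrix n n K} (hA : IsIdempotentElem A) : A.trace = A.rank := by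
  have hlin : IsIdempotentElem (Matrix.toLin' A) := hA.map Matrix.toLinAlgEquiv'
  rw [← Matrix.trace_toLin'_eq, (LinearMap.IsIdempotentElem.isProj_range _ hlin).trace,
    Matrix.rank]
  rfl

theorem Matrix.PosSemidef.smul_card_le_trace {n R : Type*} [Fintype n] [DecidableEq n]
    [CommRing R] [PartialOrder R] [StarRing R] [IsOrderedAddMonoid R] {A : Matrix n n R} {c : R}
    (h : (A - c • 1).PosSemidef) : c * Fintype.card n ≤ A.trace := by
  have := h.trace_nonneg
  rwa [Matrix.trace_sub, Matrix.trace_smul, Matrix.trace_one, smul_eq_mul, sub_nonneg] at this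

section FractionalColoring

variable {α : Type*} [Fintype α] (G : SimpleGraph α)

theorem mem_indepFinsets {I : Finset α} : I ∈ indepFinsets G ↔ IsIndep G ↑I := by
  simp [indepFinsets]

theorem isFracColoring_singletons :
    IsFracColoring G (fun _ => 1) (fun I => if I.card = 1 then 1 else 0) := by
  refine ⟨fun I => ite_nonneg zero_le_one le_rfl, fun v => ?_⟩
  have hv : {v} ∈ (indepFinsets G).filter (v ∈ ·) := by
    simp [mem_indepFinsets, IsIndep]
  calc (1 : ℝ) = if ({v} : Finset α).card = 1 then 1 else 0 := by simp
    _ ≤ _ := Finset.single_le_sum (f := fun I : Finset α => if I.card = 1 then (1 : ℝ) else 0)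
          (fun I _ => ite_nonneg zero_le_one le_rfl) hv

variable {G}

/-- Weak LP duality between fractional colourings and fractional cliques. -/
theorem IsFracColoring.sum_mul_le_sum {c w : α → ℝ} {z : Finset α → ℝ}
    (hz : IsFracColoring G c z) (hw0 : ∀ v, 0 ≤ w v)
    (hwI : ∀ I : Finset α, IsIndep G ↑I → ∑ v ∈ I, w v ≤ 1) :
    ∑ v, w v * c v ≤ ∑ I ∈ indepFinsets G, z I :=
  calc ∑ v, w v * c v
      ≤ ∑ v, w v * ∑ I ∈ (indepFinsets G).filter (v ∈ ·), z I :=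
        Finset.sum_le_sum fun v _ => mul_le_mul_of_nonneg_left (hz.2 v) (hw0 v)
    _ = ∑ I ∈ indepFinsets G, (∑ v ∈ I, w v) * z I := by
        simp_rw [Finset.mul_sum, Finset.sum_filter]
        rw [Finset.sum_comm]
        refine Finset.sum_congr rfl fun I _ => ?_
        rw [Finset.sum_mul, ← Finset.sum_filter, Finset.filter_mem_eq_inter, Finset.univ_inter]
    _ ≤ ∑ I ∈ indepFinsets G, z I :=
        Finset.sum_le_sum fun I hI =>
          mul_le_of_le_one_left (hz.1 I) (hwI I ((mem_indepFinsets G).1 hI))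

theorem sum_le_fracChrom {w : α → ℝ} (hw0 : ∀ v, 0 ≤ w v)
    (hwI : ∀ I : Finset α, IsIndep G ↑I → ∑ v ∈ I, w v ≤ 1) :
    ∑ v, w v ≤ fracChrom G :=
  le_csInf ⟨_, _, isFracColoring_singletons G, rfl⟩ <| by
    rintro _ ⟨z, hz, rfl⟩
    simpa using hz.sum_mul_le_sum hw0 hwI

end FractionalColoring

theorem eta_dim_le_rank_fracChrom_general {α : Type*} [Fintype α] (G : SimpleGraph α)
    (r d : ℕ)
    (P : α → Matrix (Fin d) (Fin d) ℂ)
    (hidem : ∀ i, P i * P i = P i)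
    (hrank : ∀ i, (P i).rank = r)
    (w : α → ℝ) (hw0 : ∀ i, 0 ≤ w i)
    (hwI : ∀ I : Finset α, IsIndep G ↑I → ∑ i ∈ I, w i ≤ 1)
    (η : ℝ)
    (hη : Matrix.PosSemidef (∑ i, (w i : ℂ) • P i - (η : ℂ) • 1)) :
    η * d ≤ r * fracChrom G := by
  have htrace : (∑ i, (w i : ℂ) • P i).trace = ((∑ i, w i) * r : ℝ) := by
    simp [Matrix.trace_sum, Matrix.trace_smul,
      fun i => Matrix.trace_eq_rank_of_isIdempotentElem_s19 (hidem i), hrank, Finset.sum_mul]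
  have hdim : η * d ≤ (∑ i, w i) * r := by
    have := hη.smul_card_le_trace
    rw [htrace, Fintype.card_fin] at this
    exact_mod_cast this
  calc η * d ≤ (∑ i, w i) * r := hdim
    _ ≤ fracChrom G * r := mul_le_mul_of_nonneg_right (sum_le_fracChrom hw0 hwI) r.cast_nonneg
    _ = r * fracChrom G := mul_comm _ _

theorem eta_dim_le_rank_fracChrom {α : Type*} [Fintype α] (G : SimpleGraph α)
    (r d : ℕ)
    (P : α → Matrix (Fin d) (Fin d) ℂ)
    (hherm : ∀ i, (P i).IsHermitian) (hidem : ∀ i, P i * P i = P i)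
    (hrank : ∀ i, (P i).rank = r)
    (horth : ∀ i j, G.Adj i j → P i * P j = 0)
    (w : α → ℝ) (hw0 : ∀ i, 0 ≤ w i)
    (hwI : ∀ I : Finset α, IsIndep G ↑I → ∑ i ∈ I, w i ≤ 1)
    (η : ℝ)
    (hη : Matrix.PosSemidef (∑ i, (w i : ℂ) • P i - (η : ℂ) • 1)) :
    η * d ≤ r * fracChrom G :=
  eta_dim_le_rank_fracChrom_general G r d P hidem hrank w hw0 hwI η hη
end
end
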